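/- Let k > 0 and μ ∈ (0,1), and let ν denote the PGN(μ,k) distribution. Then ν((0,∞)) > ν((−∞,0)) if and only if μ < 1/2; ν((0,∞)) < ν((−∞,0)) if and only if μ > 1/2; and ν((0,∞)) = ν((−∞,0)) if and only if μ = 1/2. -/

import Mathlib

open MeasureTheory Real Set

/-- Density of the chi-squared distribution with `k` degrees of freedom. -/
noncomputable def chiSqDensity (k : ℝ) (v : ℝ) : ℝ :=
  if 0 < v then v ^ (k / 2 - 1) * Real.exp (-v / 2) / ((2 : ℝ) ^ (k / 2) * Real.Gamma (k / 2))
  else 0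

/-- The Beta function `B(a,b) = Γ(a)Γ(b)/Γ(a+b)`. -/
noncomputable def realBeta (a b : ℝ) : ℝ := Real.Gamma a * Real.Gamma b / Real.Gamma (a + b)

/-- Density of the Beta(2μ, 2(1-μ)) distribution. -/
noncomputable def betaDensity (μ : ℝ) (u : ℝ) : ℝ :=
  if 0 < u ∧ u < 1 then
    u ^ (2 * μ - 1) * (1 - u) ^ (1 - 2 * μ) / realBeta (2 * μ) (2 * (1 - μ))
  else 0

/-- The chi-squared distribution with `k` degrees of freedom, as a measure on ℝ. -/
noncomputable def chiSqMeasure (k : ℝ) : Measure ℝ :=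
  volume.withDensity (fun v => ENNReal.ofReal (chiSqDensity k v))

/-- The Beta(2μ, 2(1-μ)) distribution, as a measure on ℝ. -/
noncomputable def betaMeasure (μ : ℝ) : Measure ℝ :=
  volume.withDensity (fun u => ENNReal.ofReal (betaDensity μ u))

/-- The polar-generalized normal distribution PGN(μ, k): the pushforward of
(chi-squared k) ⊗ (Beta(2μ, 2(1-μ))) under `(v, u) ↦ √v · cos (π u)`. -/
noncomputable def PGN (μ k : ℝ) : Measure ℝ :=
  Measure.map (fun p : ℝ × ℝ => Real.sqrt p.1 * Real.cos (π * p.2))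
    ((chiSqMeasure k).prod (betaMeasure μ))

/-! Since `√v ≥ 0`, the point `√v · cos (π u)` is positive (negative) exactly when `v > 0` and
`cos (π u)` is positive (negative), and `v > 0` has chi-squared probability one. Hence
`ν (0, ∞)` and `ν (-∞, 0)` are the Beta(2μ, 2(1-μ)) masses of `(0, 1/2)` and `(1/2, 1)`.
The reflection `u ↦ 1 - u` exchanges Beta(a, b) and Beta(b, a), so the second mass is the
Beta(2(1-μ), 2μ) mass of `(0, 1/2)`. On `(0, 1/2)` the density of Beta(a, b) strictly dominates
that of Beta(b, a) when `a < b`, because `u < 1 - u` gives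
`u ^ (b-1) (1-u) ^ (a-1) < u ^ (a-1) (1-u) ^ (b-1)`. -/

lemma rpow_mul_rpow_lt_rpow_mul_rpow {x y c d : ℝ} (hx : 0 < x) (hxy : x < y) (hcd : c < d) :
    x ^ d * y ^ c < x ^ c * y ^ d := by
  have hy : 0 < y := hx.trans hxy
  have hsplit : ∀ z : ℝ, 0 < z → z ^ d = z ^ c * z ^ (d - c) := fun z hz => by
    rw [← Real.rpow_add hz, add_sub_cancel]
  rw [hsplit x hx, hsplit y hy, mul_right_comm, mul_assoc (x ^ c)]
  gcongr

lemma cos_pi_mul_pos_iff {u : ℝ} (hu : u ∈ Ioo (0 : ℝ) 1) : 0 < cos (π * u) ↔ u < 1 / 2 := by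
  have hmem : π * u ∈ Icc 0 π := ⟨by nlinarith [pi_pos, hu.1], by nlinarith [pi_pos, hu.2]⟩
  have hhalf : π / 2 ∈ Icc 0 π := ⟨by linarith [pi_pos], by linarith [pi_pos]⟩
  rw [← cos_pi_div_two, strictAntiOn_cos.lt_iff_gt hhalf hmem]
  constructor <;> intro h <;> nlinarith [pi_pos]

lemma cos_pi_mul_neg_iff {u : ℝ} (hu : u ∈ Ioo (0 : ℝ) 1) : cos (π * u) < 0 ↔ 1 / 2 < u := by
  have hmem : π * u ∈ Icc 0 π := ⟨by nlinarith [pi_pos, hu.1], by nlinarith [pi_pos, hu.2]⟩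
  have hhalf : π / 2 ∈ Icc 0 π := ⟨by linarith [pi_pos], by linarith [pi_pos]⟩
  rw [← cos_pi_div_two, strictAntiOn_cos.lt_iff_gt hmem hhalf]
  constructor <;> intro h <;> nlinarith [pi_pos]

namespace ProbabilityTheory

lemma beta_comm (α β : ℝ) : beta α β = beta β α := by
  rw [beta, beta, mul_comm, add_comm]

lemma betaPDFReal_one_sub (α β x : ℝ) : betaPDFReal α β (1 - x) = betaPDFReal β α x := by
  simp only [betaPDFReal, sub_sub_cancel, beta_comm α β]
  refine if_congr ⟨fun h => ⟨by linarith, by linarith⟩, fun h => ⟨by linarith, by linarith⟩⟩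
    (by ring) rfl

lemma betaMeasure_compl_Ioo (α β : ℝ) : betaMeasure α β (Ioo 0 1)ᶜ = 0 := by
  rw [betaMeasure, withDensity_apply _ measurableSet_Ioo.compl]
  refine setLIntegral_eq_zero measurableSet_Ioo.compl fun x hx => ?_
  rw [betaPDF, betaPDFReal, if_neg (show ¬(0 < x ∧ x < 1) from hx), ENNReal.ofReal_zero,
    Pi.zero_apply]

lemma map_one_sub_betaMeasure (α β : ℝ) :
    (betaMeasure α β).map (fun x => 1 - x) = betaMeasure β α := by
  have hemb : MeasurableEmbedding (fun x : ℝ => 1 - x) :=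
    (Homeomorph.subLeft (1 : ℝ)).measurableEmbedding
  ext s hs
  rw [hemb.map_apply, betaMeasure, betaMeasure, withDensity_apply' _, withDensity_apply' _,
    ← (Measure.measurePreserving_sub_left volume 1).setLIntegral_comp_preimage_emb hemb
      (betaPDF β α) s]
  simp only [betaPDF, betaPDFReal_one_sub]

lemma betaMeasure_Ioo_half_one (α β : ℝ) :
    betaMeasure α β (Ioo (1 / 2) 1) = betaMeasure β α (Ioo 0 (1 / 2)) := by
  rw [← map_one_sub_betaMeasure α β, Measure.map_apply (by fun_prop) measurableSet_Ioo,
    preimage_const_sub_Ioo]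
  norm_num

lemma betaPDFReal_lt_betaPDFReal_swap {α β x : ℝ} (hα : 0 < α) (hαβ : α < β)
    (hx : x ∈ Ioo (0 : ℝ) (1 / 2)) : betaPDFReal β α x < betaPDFReal α β x := by
  have hx1 : x < 1 := by linarith [hx.2]
  rw [betaPDFReal, betaPDFReal, if_pos ⟨hx.1, hx1⟩, if_pos ⟨hx.1, hx1⟩, beta_comm β α,
    mul_assoc, mul_assoc]
  have hB : 0 < 1 / beta α β := one_div_pos.2 (beta_pos hα (hα.trans hαβ))
  exact mul_lt_mul_of_pos_left
    (rpow_mul_rpow_lt_rpow_mul_rpow hx.1 (by linarith [hx.2]) (by linarith)) hB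

lemma betaMeasure_swap_Ioo_zero_half_lt {α β : ℝ} (hα : 0 < α) (hαβ : α < β) :
    betaMeasure β α (Ioo 0 (1 / 2)) < betaMeasure α β (Ioo 0 (1 / 2)) := by
  have : IsProbabilityMeasure (betaMeasure β α) := isProbabilityMeasureBeta (hα.trans hαβ) hα
  have hfin := measure_ne_top (betaMeasure β α) (Ioo 0 (1 / 2))
  simp only [betaMeasure, withDensity_apply _ measurableSet_Ioo] at hfin ⊢
  refine lintegral_strict_mono (by simp) (measurable_betaPDFReal α β).ennreal_ofReal.aemeasurable
    hfin ?_
  refine ae_restrict_of_forall_mem measurableSet_Ioo fun x hx => ?_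
  exact (ENNReal.ofReal_lt_ofReal_iff (betaPDFReal_pos hx.1 (by linarith [hx.2]) hα
    (hα.trans hαβ))).2 (betaPDFReal_lt_betaPDFReal_swap hα hαβ hx)

end ProbabilityTheory

lemma betaMeasure_eq_betaMeasure (μ : ℝ) :
    betaMeasure μ = ProbabilityTheory.betaMeasure (2 * μ) (2 * (1 - μ)) := by
  rw [betaMeasure, ProbabilityTheory.betaMeasure]
  congr 1
  funext u
  rw [betaDensity, ProbabilityTheory.betaPDF, ProbabilityTheory.betaPDFReal,
    show 2 * (1 - μ) - 1 = 1 - 2 * μ by ring]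
  split_ifs
  · rw [realBeta, ProbabilityTheory.beta]
    congr 1
    ring
  · rfl

lemma chiSqMeasure_eq_gammaMeasure (k : ℝ) :
    chiSqMeasure k = ProbabilityTheory.gammaMeasure (k / 2) (1 / 2) := by
  refine withDensity_congr_ae ?_
  filter_upwards [volume.ae_ne 0] with v hv
  rw [chiSqDensity, ProbabilityTheory.gammaPDF, ProbabilityTheory.gammaPDFReal]
  rcases hv.lt_or_gt with hv | hv
  · rw [if_neg hv.not_gt, if_neg hv.not_ge]
  · rw [if_pos hv, if_pos hv.le, Real.div_rpow one_pos.le two_pos.le, Real.one_rpow]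
    congr 1
    field_simp

lemma chiSqMeasure_Ioi (k : ℝ) (hk : 0 < k) : chiSqMeasure k (Ioi 0) = 1 := by
  have : IsProbabilityMeasure (chiSqMeasure k) := by
    rw [chiSqMeasure_eq_gammaMeasure]
    exact ProbabilityTheory.isProbabilityMeasure_gammaMeasure (by linarith) (by norm_num)
  rw [← compl_Iic, prob_compl_eq_one_iff measurableSet_Iic, chiSqMeasure,
    withDensity_apply _ measurableSet_Iic]
  refine setLIntegral_eq_zero measurableSet_Iic fun v hv => ?_
  rw [chiSqDensity, if_neg (not_lt.2 hv), ENNReal.ofReal_zero, Pi.zero_apply]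

instance (μ : ℝ) : SFinite (betaMeasure μ) := by
  rw [betaMeasure]; infer_instance

lemma preimage_sqrt_mul_cos_Ioi :
    (fun p : ℝ × ℝ => √p.1 * cos (π * p.2)) ⁻¹' Ioi 0 = Ioi 0 ×ˢ {u | 0 < cos (π * u)} := by
  ext ⟨v, u⟩
  simp [mul_pos_iff, (Real.sqrt_nonneg v).not_gt]

lemma preimage_sqrt_mul_cos_Iio :
    (fun p : ℝ × ℝ => √p.1 * cos (π * p.2)) ⁻¹' Iio 0 = Ioi 0 ×ˢ {u | cos (π * u) < 0} := by
  ext ⟨v, u⟩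
  simp [mul_neg_iff, (Real.sqrt_nonneg v).not_gt]

lemma setOf_cos_pi_mul_pos_inter_Ioo : {u | 0 < cos (π * u)} ∩ Ioo 0 1 = Ioo 0 (1 / 2) := by
  ext u
  refine ⟨fun ⟨h, hu⟩ => ⟨hu.1, (cos_pi_mul_pos_iff hu).1 h⟩, fun hu => ?_⟩
  have hu' : u ∈ Ioo (0 : ℝ) 1 := ⟨hu.1, by linarith [hu.2]⟩
  exact ⟨(cos_pi_mul_pos_iff hu').2 hu.2, hu'⟩

lemma setOf_cos_pi_mul_neg_inter_Ioo : {u | cos (π * u) < 0} ∩ Ioo 0 1 = Ioo (1 / 2) 1 := by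
  ext u
  refine ⟨fun ⟨h, hu⟩ => ⟨(cos_pi_mul_neg_iff hu).1 h, hu.2⟩, fun hu => ?_⟩
  have hu' : u ∈ Ioo (0 : ℝ) 1 := ⟨by linarith [hu.1], hu.2⟩
  exact ⟨(cos_pi_mul_neg_iff hu').2 hu.1, hu'⟩

lemma PGN_Ioi {k : ℝ} (hk : 0 < k) (μ : ℝ) :
    PGN μ k (Ioi 0) = ProbabilityTheory.betaMeasure (2 * μ) (2 * (1 - μ)) (Ioo 0 (1 / 2)) := by
  rw [PGN, Measure.map_apply (by fun_prop) measurableSet_Ioi, preimage_sqrt_mul_cos_Ioi,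
    Measure.prod_prod, chiSqMeasure_Ioi k hk, one_mul, betaMeasure_eq_betaMeasure,
    ← measure_inter_conull (ProbabilityTheory.betaMeasure_compl_Ioo _ _),
    setOf_cos_pi_mul_pos_inter_Ioo]

lemma PGN_Iio {k : ℝ} (hk : 0 < k) (μ : ℝ) :
    PGN μ k (Iio 0) = ProbabilityTheory.betaMeasure (2 * (1 - μ)) (2 * μ) (Ioo 0 (1 / 2)) := by
  rw [PGN, Measure.map_apply (by fun_prop) measurableSet_Iio, preimage_sqrt_mul_cos_Iio,
    Measure.prod_prod, chiSqMeasure_Ioi k hk, one_mul, betaMeasure_eq_betaMeasure,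
    ← measure_inter_conull (ProbabilityTheory.betaMeasure_compl_Ioo _ _),
    setOf_cos_pi_mul_neg_inter_Ioo, ProbabilityTheory.betaMeasure_Ioo_half_one]

theorem stmt9 (k μ : ℝ) (hk : 0 < k) (hμ : μ ∈ Set.Ioo (0:ℝ) 1) :
    (PGN μ k (Set.Iio 0) < PGN μ k (Set.Ioi 0) ↔ μ < 1/2) ∧
    (PGN μ k (Set.Ioi 0) < PGN μ k (Set.Iio 0) ↔ 1/2 < μ) ∧
    (PGN μ k (Set.Ioi 0) = PGN μ k (Set.Iio 0) ↔ μ = 1/2) := by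
  obtain ⟨hμ0, hμ1⟩ := hμ
  have hcmp : cmp (PGN μ k (Iio 0)) (PGN μ k (Ioi 0)) = cmp μ (1 / 2) := by
    rw [PGN_Ioi hk, PGN_Iio hk]
    rcases lt_trichotomy μ (1 / 2) with h | rfl | h
    · rw [h.cmp_eq_lt,
        (ProbabilityTheory.betaMeasure_swap_Ioo_zero_half_lt (by linarith) (by linarith)).cmp_eq_lt]
    · norm_num
    · rw [h.cmp_eq_gt,
        (ProbabilityTheory.betaMeasure_swap_Ioo_zero_half_lt (by linarith) (by linarith)).cmp_eq_gt]
  exact ⟨lt_iff_lt_of_cmp_eq_cmp hcmp, lt_iff_lt_of_cmp_eq_cmp (cmp_eq_cmp_symm.1 hcmp),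
    eq_comm.trans (eq_iff_eq_of_cmp_eq_cmp hcmp)⟩
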